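/- Let D = H_α ⊕ H_α* with the product making H_α and H_α* (with e2* ∘ e2* = −(1+α) a e3*) subalgebras and with the given cross products: e3 ∗ e2* = e1* − (α+1)a e2 and e2* ∗ e3 = α e1* − (α+1)a e2, e2* ∗ e1 = e3*, e1 ∗ e2* = α e3*. Then the symmetric bilinear form B(x + a*, y + b*) = ⟨x, b*⟩ + ⟨a*, y⟩ is invariant: B(u ∗ v, w) = B(u, v ∗ w) for all u, v, w ∈ D. -/
import Mathlib


open Finset

/-- An element of the double `D = H_α ⊕ H_α*`: a pair of coordinate vectors,
the first w.r.t. the basis `e₁,e₂,e₃` of `H_α`, the second w.r.t. the dual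
basis `e₁*,e₂*,e₃*` of `H_α*`. -/
abbrev Dbl := (Fin 3 → ℂ) × (Fin 3 → ℂ)

/-- The product on the double `D = H_α ⊕ H_α*`, determined bilinearly by:
`e₁ ∗ e₃ = e₂`, `e₃ ∗ e₁ = α e₂`, `e₂* ∗ e₂* = −(1+α) a e₃*`,
`e₂* ∗ e₁ = e₃*`, `e₁ ∗ e₂* = α e₃*`, `e₃ ∗ e₂* = e₁* − (α+1) a e₂`,
`e₂* ∗ e₃ = α e₁* − (α+1) a e₂`, all other basis products zero. -/
def mulD (α a : ℂ) (p q : Dbl) : Dbl :=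
  (fun k => if k = 1 then
      p.1 0 * q.1 2 + α * (p.1 2 * q.1 0)
        - (α + 1) * a * (p.1 2 * q.2 1 + p.2 1 * q.1 2)
    else 0,
   fun k =>
    if k = 0 then p.1 2 * q.2 1 + α * (p.2 1 * q.1 2)
    else if k = 2 then
      -(1 + α) * a * (p.2 1 * q.2 1) + p.2 1 * q.1 0 + α * (p.1 0 * q.2 1)
    else 0)

/-- The natural symmetric bilinear form on `D = H_α ⊕ H_α*`:
`B(x + a*, y + b*) = ⟨x, b*⟩ + ⟨a*, y⟩`. -/
noncomputable def formB (p q : Dbl) : ℂ := (∑ k, p.1 k * q.2 k) + (∑ k, p.2 k * q.1 k)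

/-- The natural symmetric bilinear form `B` on the double `D = H_α ⊕ H_α*` is
invariant: `B(u ∗ v, w) = B(u, v ∗ w)`. -/
theorem formB_invariant (α a : ℂ) (u v w : Dbl) :
    formB (mulD α a u v) w = formB u (mulD α a v w) := by
  simp [formB, mulD, Fin.sum_univ_three]
  ring
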